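/- arXiv:1310.1142 — 3 statements merged into one kernel-verified Lean document; each statement's English description precedes it below -/
import Mathlib

section
/- Let V be a right-continuous nondecreasing process with V₀ = 0 all of whose jumps satisfy ΔV ≥ α² whenever ΔV > 0, and suppose V_{t-} ≤ n for all t ≤ τ_n. Then for every t ≤ τ_n, the sum of √(ΔV_s) over s ≤ t is at most (1/β_n) · √(V_t), where β_n = √(1 + n/α²) − √(n/α²). -/
/-!
Put `a = V_{s-}`, `Δ = ΔV_s` and `c = n / α²`. Since `a ≤ n ≤ c Δ`, the bound
`β_n √Δ ≤ √(a + Δ) - √a` is equivalent to `√((1 + c) Δ) + √a ≤ √(a + Δ) + √(c Δ)`. Squared, the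
two sides differ only in their cross terms, so it reduces to `(1 + c) Δ a ≤ (a + Δ) c Δ`, i.e. to
`a ≤ c Δ`. Hence `β_n √(ΔV_s)` is at most the jump of the nondecreasing
function `√V` at `s`, and those jumps over `(0, t]` add up to at most `√V_t - √V_0 = √V_t`.
-/

open Function Finset

theorem Real.sqrt_add_sqrt_le_sqrt_add_sqrt {p q r s : ℝ} (hp : 0 ≤ p) (hq : 0 ≤ q)
    (hr : 0 ≤ r) (hs : 0 ≤ s) (hsum : p + q = r + s) (hmul : p * q ≤ r * s) :
    √p + √q ≤ √r + √s := by
  have hsq : ∀ {x y : ℝ}, 0 ≤ x → 0 ≤ y → (√x + √y) ^ 2 = x + y + 2 * √(x * y) := by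
    intro x y hx hy
    rw [Real.sqrt_mul hx, add_sq, Real.sq_sqrt hx, Real.sq_sqrt hy]
    ring
  rw [← pow_le_pow_iff_left₀ (by positivity) (by positivity) two_ne_zero, hsq hp hq, hsq hr hs,
    hsum]
  gcongr

theorem Real.sqrt_one_add_sub_sqrt_mul_sqrt_le {a c Δ : ℝ} (ha : 0 ≤ a) (hc : 0 ≤ c)
    (hΔ : 0 ≤ Δ) (hac : a ≤ c * Δ) :
    (√(1 + c) - √c) * √Δ ≤ √(a + Δ) - √a := by
  rw [sub_mul, ← Real.sqrt_mul (by positivity), ← Real.sqrt_mul hc, sub_le_sub_iff]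
  exact Real.sqrt_add_sqrt_le_sqrt_add_sqrt (by positivity) ha (by positivity) (by positivity)
    (by ring) (by nlinarith)

theorem Monotone.sum_comp_sub_comp_leftLim_le {α β γ : Type*} [LinearOrder α]
    [ConditionallyCompleteLinearOrder β] [TopologicalSpace β] [OrderTopology β]
    [AddCommGroup γ] [PartialOrder γ] [IsOrderedAddMonoid γ]
    {V : α → β} {f : β → γ} (hV : Monotone V) (hf : Monotone f) {a : α} {B : β}
    (T : Finset α) (haB : V a ≤ B) (hT : ∀ s ∈ T, a < s ∧ V s ≤ B) :
    ∑ s ∈ T, (f (V s) - f (leftLim V s)) ≤ f B - f (V a) := by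
  classical
  induction T using Finset.induction_on_max generalizing B with
  | empty => simpa using hf haB
  | insert m T hlt ih =>
    obtain ⟨ham, hmB⟩ := hT m (mem_insert_self m T)
    have hT' : ∑ s ∈ T, (f (V s) - f (leftLim V s)) ≤ f (leftLim V m) - f (V a) :=
      ih (hV.le_leftLim ham) fun s hs ↦
        ⟨(hT s (mem_insert_of_mem hs)).1, hV.le_leftLim (hlt s hs)⟩
    rw [sum_insert fun hm ↦ (hlt m hm).false]
    calc f (V m) - f (leftLim V m) + ∑ s ∈ T, (f (V s) - f (leftLim V s))
        ≤ f (V m) - f (leftLim V m) + (f (leftLim V m) - f (V a)) := by gcongr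
      _ = f (V m) - f (V a) := by abel
      _ ≤ f B - f (V a) := by gcongr; exact hf hmB

theorem Real.sqrt_one_add_div_sub_sqrt_div_mul_sqrt_le {a n α Δ : ℝ} (hα : α ≠ 0) (ha : 0 ≤ a)
    (han : a ≤ n) (hΔ : 0 ≤ Δ) (hjump : 0 < Δ → α ^ 2 ≤ Δ) :
    (√(1 + n / α ^ 2) - √(n / α ^ 2)) * √Δ ≤ √(a + Δ) - √a := by
  rcases hΔ.eq_or_lt with rfl | hΔpos
  · simp
  have hn : 0 ≤ n := ha.trans han
  have hn_le : n ≤ n / α ^ 2 * Δ :=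
    calc n = n / α ^ 2 * α ^ 2 := (div_mul_cancel₀ n (pow_ne_zero 2 hα)).symm
      _ ≤ n / α ^ 2 * Δ := by gcongr; exact hjump hΔpos
  exact Real.sqrt_one_add_sub_sqrt_mul_sqrt_le ha (by positivity) hΔ (han.trans hn_le)

theorem ENNReal.tsum_ite_ofReal_le {ι : Type*} {S : Set ι} [DecidablePred (· ∈ S)] {g : ι → ℝ}
    {C : ℝ} (hg : ∀ i ∈ S, 0 ≤ g i) (h : ∀ F : Finset ι, (∀ i ∈ F, i ∈ S) → ∑ i ∈ F, g i ≤ C) :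
    (∑' i, if i ∈ S then ENNReal.ofReal (g i) else 0) ≤ ENNReal.ofReal C := by
  refine ENNReal.summable.tsum_le_of_sum_le fun F ↦ ?_
  rw [← sum_filter, ← ENNReal.ofReal_sum_of_nonneg fun i hi ↦ hg i (mem_filter.1 hi).2]
  exact ENNReal.ofReal_le_ofReal (h _ fun i hi ↦ (mem_filter.1 hi).2)

theorem sum_sqrt_jumps_le_general (V : ℝ → ℝ) (α : ℝ) (n : ℝ) (t : ℝ)
    (hα : 0 < α)
    (hmono : Monotone V) (hV0 : V 0 = 0)
    (hjump : ∀ s : ℝ, 0 < V s - Function.leftLim V s →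
      α ^ 2 ≤ V s - Function.leftLim V s)
    (hbound : ∀ s : ℝ, s ≤ t → Function.leftLim V s ≤ n)
    (ht : 0 < t) :
    (∑' s : ℝ, if s ∈ Set.Ioc (0 : ℝ) t then
        ENNReal.ofReal (Real.sqrt (V s - Function.leftLim V s)) else 0) ≤
      ENNReal.ofReal
        ((Real.sqrt (1 + n / α ^ 2) - Real.sqrt (n / α ^ 2))⁻¹ * Real.sqrt (V t)) := by
  set β := √(1 + n / α ^ 2) - √(n / α ^ 2)
  have hn0 : 0 ≤ n := (hV0 ▸ hmono.le_leftLim ht).trans (hbound t le_rfl)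
  have hβ : 0 < β := sub_pos.2 (Real.sqrt_lt_sqrt (by positivity) (lt_one_add _))
  have hjump_term : ∀ s ∈ Set.Ioc (0 : ℝ) t,
      β * √(V s - leftLim V s) ≤ √(V s) - √(leftLim V s) := fun s ⟨hs0, hst⟩ ↦ by
    simpa using Real.sqrt_one_add_div_sub_sqrt_div_mul_sqrt_le hα.ne'
      (hV0 ▸ hmono.le_leftLim hs0) (hbound s hst) (sub_nonneg.2 (hmono.leftLim_le le_rfl))
      (hjump s)
  refine ENNReal.tsum_ite_ofReal_le (fun _ _ ↦ Real.sqrt_nonneg _) fun F hF ↦ ?_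
  rw [inv_mul_eq_div, le_div_iff₀ hβ, sum_mul]
  calc ∑ s ∈ F, √(V s - leftLim V s) * β
      ≤ ∑ s ∈ F, (√(V s) - √(leftLim V s)) :=
        sum_le_sum fun s hs ↦ mul_comm β _ ▸ hjump_term s (hF s hs)
    _ ≤ √(V t) - √(V 0) :=
        hmono.sum_comp_sub_comp_leftLim_le Real.sqrt_monotone F (hmono ht.le) fun s hs ↦
          ⟨(hF s hs).1, hmono (hF s hs).2⟩
    _ = √(V t) := by rw [hV0, Real.sqrt_zero, sub_zero]

/-- For a nondecreasing right-continuous process `V` with `V 0 = 0`, whose nonzero jumps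
are at least `α²`, and with left limits bounded by `n` up to time `t`, the sum of the
square roots of the jumps up to `t` is at most `(1/βₙ) √(V t)`, where
`βₙ = √(1 + n/α²) − √(n/α²)`. -/
theorem sum_sqrt_jumps_le (V : ℝ → ℝ) (α : ℝ) (n : ℝ) (t : ℝ)
    (hα : 0 < α) (hn : 1 ≤ n)
    (hmono : Monotone V) (hV0 : V 0 = 0)
    (hrc : ∀ s : ℝ, ContinuousWithinAt V (Set.Ici s) s)
    (hjump : ∀ s : ℝ, 0 < V s - Function.leftLim V s →
      α ^ 2 ≤ V s - Function.leftLim V s)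
    (hbound : ∀ s : ℝ, s ≤ t → Function.leftLim V s ≤ n)
    (ht : 0 < t) :
    (∑' s : ℝ, if s ∈ Set.Ioc (0 : ℝ) t then
        ENNReal.ofReal (Real.sqrt (V s - Function.leftLim V s)) else 0) ≤
      ENNReal.ofReal
        ((Real.sqrt (1 + n / α ^ 2) - Real.sqrt (n / α ^ 2))⁻¹ * Real.sqrt (V t)) :=
  sum_sqrt_jumps_le_general V α n t hα hmono hV0 hjump hbound ht
end

section
/- Let τ be a random time on a filtered probability space and let Z_t = P(τ > t | ℱ_t), Z̃_t = P(τ ≥ t | ℱ_t). For any two equivalent probability measures Q ∼ P, defining Z̃^Q_t = Q(τ ≥ t | ℱ_t), one has for any ℱ-stopping time T: {Z̃^Q_T = 0} = {Z̃_T = 0} almost surely. -/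
/-!
On the `m`-measurable event `A = {μ[f | m] = 0}` we have `∫_A f dμ = ∫_A μ[f | m] dμ = 0`, so a
nonnegative `f` vanishes `μ`-a.e. on `A`, hence also `ν`-a.e. on `A` when `ν ≪ μ`; then
`ν[f | m]` vanishes `ν`-a.e. on `A` as well. Applied to `f = 1_{τ ≥ T}` in both directions
`P ≪ Q` and `Q ≪ P`, this gives the two inclusions between the zero sets.
-/

open MeasureTheory

namespace MeasureTheory

variable {Ω : Type*} {m m0 : MeasurableSpace Ω} {μ ν : Measure Ω} {f : Ω → ℝ}

lemma ae_restrict_condExp_eq_zero_eq_zero (hm : m ≤ m0) [SigmaFinite (μ.trim hm)]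
    (hf_nonneg : 0 ≤ᵐ[μ] f) (hf : Integrable f μ) :
    f =ᵐ[μ.restrict {x | μ[f | m] x = 0}] 0 := by
  have hA : MeasurableSet[m] {x | μ[f | m] x = 0} :=
    stronglyMeasurable_condExp.measurable (measurableSet_singleton 0)
  have h_int : ∫ x in {x | μ[f | m] x = 0}, f x ∂μ = 0 := by
    rw [← setIntegral_condExp hm hf hA]
    exact setIntegral_eq_zero_of_forall_eq_zero fun _ hx => hx
  exact (setIntegral_eq_zero_iff_of_nonneg_ae (ae_restrict_of_ae hf_nonneg)
    hf.integrableOn).mp h_int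

lemma ae_condExp_eq_zero_imp_of_absolutelyContinuous (hm : m ≤ m0) [SigmaFinite (μ.trim hm)]
    (hνμ : ν ≪ μ) (hf_nonneg : 0 ≤ᵐ[μ] f) (hf : Integrable f μ) :
    ∀ᵐ x ∂ν, μ[f | m] x = 0 → ν[f | m] x = 0 := by
  have hA : MeasurableSet[m] {x | μ[f | m] x = 0} :=
    stronglyMeasurable_condExp.measurable (measurableSet_singleton 0)
  have hf_zero : f =ᵐ[ν.restrict {x | μ[f | m] x = 0}] 0 :=
    (hνμ.restrict _).ae_le (ae_restrict_condExp_eq_zero_eq_zero hm hf_nonneg hf)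
  exact ae_imp_of_ae_restrict (condExp_ae_eq_restrict_zero hA hf_zero)

end MeasureTheory

/-- For equivalent probability measures `P ∼ Q`, with `Z̃_T = P(τ ≥ T | ℱ_T)` and
`Z̃^Q_T = Q(τ ≥ T | ℱ_T)`, the events `{Z̃^Q_T = 0}` and `{Z̃_T = 0}` coincide a.s. -/
theorem condexp_zero_set_equiv_measures
    {Ω : Type*} {m m0 : MeasurableSpace Ω} (hm : m ≤ m0)
    (P Q : Measure Ω) [IsProbabilityMeasure P] [IsProbabilityMeasure Q]
    (hPQ : P ≪ Q) (hQP : Q ≪ P)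
    (τ T : Ω → ℝ) (hB : MeasurableSet {ω | T ω ≤ τ ω}) :
    ∀ᵐ ω ∂P,
      ((Q[Set.indicator {ω' | T ω' ≤ τ ω'} (fun _ => (1 : ℝ)) | m]) ω = 0 ↔
        (P[Set.indicator {ω' | T ω' ≤ τ ω'} (fun _ => (1 : ℝ)) | m]) ω = 0) := by
  have h_nonneg (μ : Measure Ω) :
      0 ≤ᵐ[μ] Set.indicator {ω' | T ω' ≤ τ ω'} (fun _ => (1 : ℝ)) :=
    .of_forall (Set.indicator_nonneg fun _ _ => zero_le_one)
  have h_int (μ : Measure Ω) [IsFiniteMeasure μ] :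
      Integrable (Set.indicator {ω' | T ω' ≤ τ ω'} (fun _ => (1 : ℝ))) μ :=
    (integrable_const 1).indicator hB
  have h_PQ := ae_condExp_eq_zero_imp_of_absolutelyContinuous hm hQP (h_nonneg P) (h_int P)
  have h_QP := ae_condExp_eq_zero_imp_of_absolutelyContinuous hm hPQ (h_nonneg Q) (h_int Q)
  filter_upwards [hPQ.ae_le h_PQ, h_QP] with ω hP_to_Q hQ_to_P
  exact ⟨hQ_to_P, hP_to_Q⟩
end

section
/- Let ξ be integrable and ℱ_{T-} ⊆ ℱ a sub-σ-algebra. Suppose Y > 0 is integrable with E[Y|ℱ_{T-}] = 1 and E[Y·ξ·1_A | ℱ_{T-}] = 0 where A ∈ ℱ. Define Y₁ := Y·1_A + 1_{Aᶜ} and Ỹ₁ := Y₁/E[Y₁|ℱ_{T-}] (well-defined since Y₁ > 0). Then Ỹ₁ > 0, E[Ỹ₁|ℱ_{T-}] = 1, and E[Ỹ₁·ξ·1_A|ℱ_{T-}] = 0 almost surely. -/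
open MeasureTheory
open scoped ENNReal

/-! The modified density `Y₁` is positive and integrable, so `g := E[Y₁ | m]` is a.s. positive and
`Ỹ₁ = g⁻¹ Y₁` with `g⁻¹` `m`-measurable. Pulling `g⁻¹` out of the conditional expectations gives
`E[Ỹ₁ | m] = g⁻¹ g = 1` and, as `Y₁ 1_A = Y 1_A`, `E[Ỹ₁ ξ 1_A | m] = g⁻¹ E[Y ξ 1_A | m] = 0`.
Integrability of `Ỹ₁` holds because the measures with densities `Y₁` and `g` agree on `m`,
so `∫ g⁻¹ Y₁ = ∫ g⁻¹ g = 1`. -/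

namespace MeasureTheory

variable {Ω : Type*} {m m0 : MeasurableSpace Ω} {μ : Measure Ω}

theorem withDensity_ofReal_condExp_trim (hm : m ≤ m0) [SigmaFinite (μ.trim hm)] {f : Ω → ℝ}
    (hf : Integrable f μ) (hf_nonneg : 0 ≤ᵐ[μ] f) :
    (μ.withDensity fun ω => ENNReal.ofReal (μ[f|m] ω)).trim hm =
      (μ.withDensity fun ω => ENNReal.ofReal (f ω)).trim hm := by
  refine @Measure.ext _ m _ _ fun s hs => ?_
  have hs0 := hm s hs
  rw [trim_measurableSet_eq hm hs, trim_measurableSet_eq hm hs, withDensity_apply _ hs0,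
    withDensity_apply _ hs0,
    ← ofReal_integral_eq_lintegral_ofReal integrable_condExp.integrableOn
      (ae_restrict_of_ae (condExp_nonneg hf_nonneg)),
    ← ofReal_integral_eq_lintegral_ofReal hf.integrableOn (ae_restrict_of_ae hf_nonneg),
    setIntegral_condExp hm hf hs]

theorem lintegral_ofReal_condExp_mul (hm : m ≤ m0) [SigmaFinite (μ.trim hm)] {f : Ω → ℝ}
    (hf : Integrable f μ) (hf_nonneg : 0 ≤ᵐ[μ] f) {h : Ω → ℝ≥0∞} (hh : Measurable[m] h) :
    ∫⁻ ω, ENNReal.ofReal (μ[f|m] ω) * h ω ∂μ = ∫⁻ ω, ENNReal.ofReal (f ω) * h ω ∂μ := by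
  have hh0 : AEMeasurable h μ := (hh.mono hm le_rfl).aemeasurable
  calc ∫⁻ ω, ENNReal.ofReal (μ[f|m] ω) * h ω ∂μ
      = ∫⁻ ω, h ω ∂(μ.withDensity fun ω => ENNReal.ofReal (μ[f|m] ω)).trim hm := by
        rw [lintegral_trim hm hh, lintegral_withDensity_eq_lintegral_mul₀
          (stronglyMeasurable_condExp.mono hm).measurable.ennreal_ofReal.aemeasurable hh0]
        rfl
    _ = ∫⁻ ω, ENNReal.ofReal (f ω) * h ω ∂μ := by
        rw [withDensity_ofReal_condExp_trim hm hf hf_nonneg, lintegral_trim hm hh,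
          lintegral_withDensity_eq_lintegral_mul₀ hf.aemeasurable.ennreal_ofReal hh0]
        rfl

theorem Integrable.mul_of_integrable_mul_condExp (hm : m ≤ m0) [SigmaFinite (μ.trim hm)]
    {f h : Ω → ℝ} (hf : Integrable f μ) (hf_nonneg : 0 ≤ᵐ[μ] f) (hh : StronglyMeasurable[m] h)
    (hhf : Integrable (fun ω => h ω * μ[f|m] ω) μ) : Integrable (fun ω => h ω * f ω) μ := by
  refine ⟨(hh.mono hm).aestronglyMeasurable.mul hf.aestronglyMeasurable, ?_⟩
  calc ∫⁻ ω, ‖h ω * f ω‖ₑ ∂μ = ∫⁻ ω, ENNReal.ofReal (f ω) * ‖h ω‖ₑ ∂μ := by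
        refine lintegral_congr_ae ?_
        filter_upwards [hf_nonneg] with ω hω
        rw [enorm_mul, Real.enorm_eq_ofReal hω, mul_comm]
    _ = ∫⁻ ω, ENNReal.ofReal (μ[f|m] ω) * ‖h ω‖ₑ ∂μ :=
        (lintegral_ofReal_condExp_mul hm hf hf_nonneg (measurable_enorm.comp hh.measurable)).symm
    _ = ∫⁻ ω, ‖h ω * μ[f|m] ω‖ₑ ∂μ := by
        refine lintegral_congr_ae ?_
        filter_upwards [condExp_nonneg (m := m) hf_nonneg] with ω hω
        rw [enorm_mul, Real.enorm_eq_ofReal hω, mul_comm]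
    _ < ∞ := hhf.2

theorem condExp_pos_of_pos (hm : m ≤ m0) [SigmaFinite (μ.trim hm)] {f : Ω → ℝ}
    (hf : Integrable f μ) (hf_pos : ∀ᵐ ω ∂μ, 0 < f ω) : ∀ᵐ ω ∂μ, 0 < μ[f|m] ω := by
  set S := {ω | μ[f|m] ω ≤ 0}
  have hS : MeasurableSet[m] S :=
    stronglyMeasurable_condExp.measurableSet_le stronglyMeasurable_const
  have hf_nonneg : 0 ≤ᵐ[μ.restrict S] f := ae_restrict_of_ae (hf_pos.mono fun _ h => h.le)
  have h_int : ∫ ω in S, f ω ∂μ = 0 := by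
    refine le_antisymm ?_ (setIntegral_nonneg_of_ae_restrict hf_nonneg)
    rw [← setIntegral_condExp hm hf hS]
    exact setIntegral_nonpos (hm _ hS) fun _ hω => hω
  have hf_zero := (setIntegral_eq_zero_iff_of_nonneg_ae hf_nonneg hf.integrableOn).mp h_int
  have hS_null : μ S = 0 := by
    rw [← Measure.restrict_eq_zero, ← ae_eq_bot, ← Filter.eventually_false_iff_eq_bot]
    filter_upwards [hf_zero, ae_restrict_of_ae hf_pos] with ω h0 hpos
    exact hpos.ne' h0
  filter_upwards [measure_eq_zero_iff_ae_notMem.mp hS_null] with ω hω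
  simpa [S] using hω

theorem condExp_mul_eq_zero_of_condExp_eq_zero {X h : Ω → ℝ} (hh : StronglyMeasurable[m] h)
    (hX : Integrable X μ) (hX0 : μ[X|m] =ᵐ[μ] 0) : μ[fun ω => h ω * X ω | m] =ᵐ[μ] 0 := by
  by_cases hhX : Integrable (fun ω => h ω * X ω) μ
  · filter_upwards [condExp_mul_of_stronglyMeasurable_left hh hhX hX, hX0] with ω h1 h2
    exact h1.trans (by simp [h2])
  · -- `condExp` of a non-integrable function is `0` by convention
    rw [condExp_of_not_integrable hhX]

end MeasureTheory

theorem normalized_density_construction_general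
    {Ω : Type*} {m m0 : MeasurableSpace Ω} (hm : m ≤ m0)
    (P : Measure Ω) [IsProbabilityMeasure P]
    (ξ Y : Ω → ℝ) (hY : Integrable Y P)
    (hYpos : ∀ᵐ ω ∂P, 0 < Y ω)
    (A : Set Ω) (hA : MeasurableSet A)
    (hYξ : Integrable (fun ω => Y ω * ξ ω * A.indicator (fun _ => (1 : ℝ)) ω) P)
    (h0 : P[fun ω => Y ω * ξ ω * A.indicator (fun _ => (1 : ℝ)) ω | m] =ᵐ[P] 0) :
    (∀ᵐ ω ∂P,
      0 < (Y ω * A.indicator (fun _ => (1 : ℝ)) ω + Aᶜ.indicator (fun _ => (1 : ℝ)) ω) /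
        (P[fun ω' => Y ω' * A.indicator (fun _ => (1 : ℝ)) ω' +
          Aᶜ.indicator (fun _ => (1 : ℝ)) ω' | m]) ω) ∧
    (P[fun ω => (Y ω * A.indicator (fun _ => (1 : ℝ)) ω + Aᶜ.indicator (fun _ => (1 : ℝ)) ω) /
        (P[fun ω' => Y ω' * A.indicator (fun _ => (1 : ℝ)) ω' +
          Aᶜ.indicator (fun _ => (1 : ℝ)) ω' | m]) ω | m] =ᵐ[P] fun _ => (1 : ℝ)) ∧
    (P[fun ω => ((Y ω * A.indicator (fun _ => (1 : ℝ)) ω + Aᶜ.indicator (fun _ => (1 : ℝ)) ω) /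
        (P[fun ω' => Y ω' * A.indicator (fun _ => (1 : ℝ)) ω' +
          Aᶜ.indicator (fun _ => (1 : ℝ)) ω' | m]) ω) * ξ ω * A.indicator (fun _ => (1 : ℝ)) ω
        | m] =ᵐ[P] 0) := by
  set Y₁ : Ω → ℝ := fun ω => Y ω * A.indicator (fun _ => 1) ω + Aᶜ.indicator (fun _ => 1) ω
  have hY₁_int : Integrable Y₁ P := by
    have hYA : Integrable (fun ω => Y ω * A.indicator (fun _ => (1 : ℝ)) ω) P := by
      simpa [← Set.indicator_mul_right] using hY.indicator hA
    exact hYA.add ((integrable_const 1).indicator hA.compl)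
  have hY₁_pos : ∀ᵐ ω ∂P, 0 < Y₁ ω := by
    filter_upwards [hYpos] with ω hω
    by_cases hωA : ω ∈ A <;> simp [Y₁, hωA, hω]
  set g := P[Y₁|m]
  have hg_pos : ∀ᵐ ω ∂P, 0 < g ω := condExp_pos_of_pos hm hY₁_int hY₁_pos
  have hg_inv : StronglyMeasurable[m] fun ω => (g ω)⁻¹ :=
    stronglyMeasurable_condExp.measurable.inv.stronglyMeasurable
  have hg_inv_mul : ∀ᵐ ω ∂P, (g ω)⁻¹ * g ω = 1 := hg_pos.mono fun ω hω => inv_mul_cancel₀ hω.ne'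
  refine ⟨?_, ?_, ?_⟩
  · filter_upwards [hY₁_pos, hg_pos] with ω h₁ h₂ using div_pos h₁ h₂
  · simp_rw [div_eq_inv_mul]
    have hint : Integrable (fun ω => (g ω)⁻¹ * Y₁ ω) P :=
      Integrable.mul_of_integrable_mul_condExp hm hY₁_int (hY₁_pos.mono fun _ h => h.le) hg_inv
        ((integrable_const 1).congr (hg_inv_mul.mono fun _ h => h.symm))
    filter_upwards [condExp_mul_of_stronglyMeasurable_left hg_inv hint hY₁_int, hg_inv_mul]
      with ω h₁ h₂
    exact h₁.trans h₂
  · have hA_eq : (fun ω => Y₁ ω / g ω * ξ ω * A.indicator (fun _ => 1) ω) =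
        fun ω => (g ω)⁻¹ * (Y ω * ξ ω * A.indicator (fun _ => 1) ω) := by
      funext ω
      by_cases hωA : ω ∈ A
      · simp only [Y₁, hωA, Set.indicator_of_mem, Set.mem_compl_iff, not_true_eq_false,
          not_false_eq_true, Set.indicator_of_notMem, mul_one, add_zero]
        ring
      · simp [hωA]
    rw [hA_eq]
    exact condExp_mul_eq_zero_of_condExp_eq_zero hg_inv hYξ h0

/-- Construction of an equivalent conditional martingale density: with
`Y₁ := Y·1_A + 1_{Aᶜ}` and `Ỹ₁ := Y₁ / E[Y₁|ℱ_{T-}]`, one has `Ỹ₁ > 0`,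
`E[Ỹ₁|ℱ_{T-}] = 1`, and `E[Ỹ₁ ξ 1_A | ℱ_{T-}] = 0` a.s. -/
theorem normalized_density_construction
    {Ω : Type*} {m m0 : MeasurableSpace Ω} (hm : m ≤ m0)
    (P : Measure Ω) [IsProbabilityMeasure P]
    (ξ Y : Ω → ℝ) (hξ : Integrable ξ P) (hY : Integrable Y P)
    (hYpos : ∀ᵐ ω ∂P, 0 < Y ω)
    (A : Set Ω) (hA : MeasurableSet A)
    (hY1 : P[Y | m] =ᵐ[P] fun _ => (1 : ℝ))
    (hYξ : Integrable (fun ω => Y ω * ξ ω * A.indicator (fun _ => (1 : ℝ)) ω) P)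
    (h0 : P[fun ω => Y ω * ξ ω * A.indicator (fun _ => (1 : ℝ)) ω | m] =ᵐ[P] 0) :
    (∀ᵐ ω ∂P,
      0 < (Y ω * A.indicator (fun _ => (1 : ℝ)) ω + Aᶜ.indicator (fun _ => (1 : ℝ)) ω) /
        (P[fun ω' => Y ω' * A.indicator (fun _ => (1 : ℝ)) ω' +
          Aᶜ.indicator (fun _ => (1 : ℝ)) ω' | m]) ω) ∧
    (P[fun ω => (Y ω * A.indicator (fun _ => (1 : ℝ)) ω + Aᶜ.indicator (fun _ => (1 : ℝ)) ω) /
        (P[fun ω' => Y ω' * A.indicator (fun _ => (1 : ℝ)) ω' +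
          Aᶜ.indicator (fun _ => (1 : ℝ)) ω' | m]) ω | m] =ᵐ[P] fun _ => (1 : ℝ)) ∧
    (P[fun ω => ((Y ω * A.indicator (fun _ => (1 : ℝ)) ω + Aᶜ.indicator (fun _ => (1 : ℝ)) ω) /
        (P[fun ω' => Y ω' * A.indicator (fun _ => (1 : ℝ)) ω' +
          Aᶜ.indicator (fun _ => (1 : ℝ)) ω' | m]) ω) * ξ ω * A.indicator (fun _ => (1 : ℝ)) ω
        | m] =ᵐ[P] 0) :=
  normalized_density_construction_general hm P ξ Y hY hYpos A hA hYξ h0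
end
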